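/- Let k ≥ 1, let Ω ⊆ ℝ⁴ be open, let u : Ω → ℝ^{k+1} be a C⁵ map with |u(x)| = 1 for all x ∈ Ω, and let h : Ω → ℝ^{k+1} be continuous with ⟨h(x), u(x)⟩ = 0 for all x ∈ Ω. For a, b ∈ ℝ^{k+1} let a × b ∈ ℝ^{(k+1)×(k+1)} denote the wedge product with entries (a × b)_{αβ} = a_α b_β − a_β b_α. Then u satisfies the approximate biharmonic map equation Δ²u + (|Δu|² + Δ(|∇u|²) + 2⟨∇u, ∇Δu⟩)u = h on Ω if and only if, componentwise on Ω, Δ(∑_{i=1}^4 ∂_i(∂_i u × u)) = 2∑_{i=1}^4 ∂_i(Δu × ∂_i u) + h × u. -/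

import Mathlib

/-! Differentiating the constraint `|u|² = 1` twice gives `⟨u, Δu⟩ = -|∇u|²` and
`⟨u, Δ²u⟩ = -(|Δu|² + Δ|∇u|² + 2⟨∇u, ∇Δu⟩)`. Together with `⟨h, u⟩ = 0` this says that the normal
component of the approximate biharmonic map equation holds automatically, so the equation is
equivalent to its tangential part `Δ²u × u = h × u`. On the other side, `∂ᵢu × ∂ᵢu = 0` and
`Δu × Δu = 0` reduce `∑ᵢ ∂ᵢ(∂ᵢu × u)` to `Δu × u`, and the Leibniz rule gives
`Δ(Δu × u) - 2∑ᵢ ∂ᵢ(Δu × ∂ᵢu) = Δ²u × u`. -/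

open MeasureTheory Metric Set Filter
open scoped ENNReal

noncomputable section

abbrev E4 := EuclideanSpace ℝ (Fin 4)

/-- partial derivative `∂ᵢ f` of a scalar function on `ℝ⁴` -/
def pd (i : Fin 4) (f : E4 → ℝ) : E4 → ℝ :=
  fun x => fderiv ℝ f x (EuclideanSpace.single i (1 : ℝ))

/-- Laplacian of a scalar function -/
def lap (f : E4 → ℝ) : E4 → ℝ := fun x => ∑ i : Fin 4, pd i (pd i f) x

/-- bilaplacian -/
def bilap (f : E4 → ℝ) : E4 → ℝ := lap (lap f)

/-- `|∇u|²` -/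
def gradSq {k : ℕ} (u : E4 → EuclideanSpace ℝ (Fin (k+1))) : E4 → ℝ :=
  fun x => ∑ i : Fin 4, ∑ a : Fin (k+1), (pd i (fun y => u y a) x) ^ 2

/-- `|Δu|²` -/
def lapNormSq {k : ℕ} (u : E4 → EuclideanSpace ℝ (Fin (k+1))) : E4 → ℝ :=
  fun x => ∑ a : Fin (k+1), (lap (fun y => u y a) x) ^ 2

/-- `⟨∇u, ∇Δu⟩` -/
def gradLapInner {k : ℕ} (u : E4 → EuclideanSpace ℝ (Fin (k+1))) : E4 → ℝ :=
  fun x => ∑ i : Fin 4, ∑ a : Fin (k+1),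
    pd i (fun y => u y a) x * pd i (lap (fun y => u y a)) x

/-- `|∇²u|²` -/
def hessSq {k : ℕ} (u : E4 → EuclideanSpace ℝ (Fin (k+1))) : E4 → ℝ :=
  fun x => ∑ i : Fin 4, ∑ j : Fin 4, ∑ a : Fin (k+1),
    (pd i (pd j (fun y => u y a)) x) ^ 2

/-- approximate biharmonic map equation `Δ²u + (|Δu|² + Δ|∇u|² + 2⟨∇u,∇Δu⟩)u = h` on `Ω` -/
def IsApproxBiharm {k : ℕ} (u h : E4 → EuclideanSpace ℝ (Fin (k+1)))
    (Ω : Set E4) : Prop :=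
  ∀ x ∈ Ω, ∀ a : Fin (k+1),
    bilap (fun y => u y a) x
      + (lapNormSq u x + lap (gradSq u) x + 2 * gradLapInner u x) * u x a = h x a

/-- `‖∇²u‖_{L²(U)}` -/
def l2Hess {k : ℕ} (u : E4 → EuclideanSpace ℝ (Fin (k+1))) (U : Set E4) : ℝ :=
  Real.sqrt (∫ x in U, hessSq u x)

/-- `‖h‖_{L^p(U)}` -/
def lpNorm {k : ℕ} (p : ℝ) (h : E4 → EuclideanSpace ℝ (Fin (k+1))) (U : Set E4) : ℝ :=
  (∫ x in U, ‖h x‖ ^ p) ^ (1 / p)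

/-- Lorentz `L^{2,1}` quasinorm on `U` -/
def lorentz21 (f : E4 → ℝ) (U : Set E4) : ℝ≥0∞ :=
  2 * ∫⁻ s in Set.Ioi (0 : ℝ), (volume {x | x ∈ U ∧ s < |f x|}) ^ (1/2 : ℝ)

/-- weak `L^{2,∞}` quasinorm on `U` -/
def weak2 (f : E4 → ℝ) (U : Set E4) : ℝ≥0∞ :=
  ⨆ (t : ℝ) (_ : 0 < t), ENNReal.ofReal t * (volume {x | x ∈ U ∧ t < |f x|}) ^ (1/2 : ℝ)

/-- wedge product on `ℝ^{k+1}`: `(a × b)_{αβ} = a_α b_β − a_β b_α` -/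
def wedge {k : ℕ} (a b : Fin (k+1) → ℝ) : Fin (k+1) → Fin (k+1) → ℝ :=
  fun α β => a α * b β - a β * b α

open Topology

section Calculus

variable {f g : E4 → ℝ} {x : E4} {i : Fin 4}

lemma pd_congr_of_eventuallyEq (h : f =ᶠ[𝓝 x] g) : pd i f x = pd i g x := by
  simp only [pd, h.fderiv_eq]

lemma lap_congr_of_eventuallyEq (h : f =ᶠ[𝓝 x] g) : lap f x = lap g x :=
  Finset.sum_congr rfl fun i _ => pd_congr_of_eventuallyEq <| by
    filter_upwards [h.eventuallyEq_nhds] with y hy using pd_congr_of_eventuallyEq hy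

lemma pd_const (c : ℝ) : pd i (fun _ => c) = fun _ => 0 := by
  funext y; simp [pd]

lemma lap_const (c : ℝ) : lap (fun _ => c) x = 0 := by
  simp [lap, pd_const]

lemma pd_neg : pd i (fun y => -f y) = fun y => -pd i f y := by
  funext y; simp [pd]

lemma lap_neg : lap (fun y => -f y) x = -lap f x := by
  simp only [lap, pd_neg, Finset.sum_neg_distrib]

lemma pd_add (hf : DifferentiableAt ℝ f x) (hg : DifferentiableAt ℝ g x) :
    pd i (fun y => f y + g y) x = pd i f x + pd i g x := by
  simp [pd, fderiv_fun_add hf hg]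

lemma pd_sub (hf : DifferentiableAt ℝ f x) (hg : DifferentiableAt ℝ g x) :
    pd i (fun y => f y - g y) x = pd i f x - pd i g x := by
  simp [pd, fderiv_fun_sub hf hg]

lemma pd_mul (hf : DifferentiableAt ℝ f x) (hg : DifferentiableAt ℝ g x) :
    pd i (fun y => f y * g y) x = pd i f x * g x + f x * pd i g x := by
  simp only [pd, fderiv_fun_mul hf hg, add_apply,
    smul_apply, smul_eq_mul]
  ring

lemma pd_sum {ι : Type*} (s : Finset ι) {F : ι → E4 → ℝ}
    (hF : ∀ j ∈ s, DifferentiableAt ℝ (F j) x) :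
    pd i (fun y => ∑ j ∈ s, F j y) x = ∑ j ∈ s, pd i (F j) x := by
  simp [pd, fderiv_fun_sum hF]

lemma ContDiffAt.pd {m n : WithTop ℕ∞} (hf : ContDiffAt ℝ n f x) (hmn : m + 1 ≤ n) :
    ContDiffAt ℝ m (pd i f) x :=
  (hf.fderiv_right hmn).clm_apply contDiffAt_const

lemma ContDiffAt.lap {m n : WithTop ℕ∞} (hf : ContDiffAt ℝ n f x) (hmn : m + 2 ≤ n) :
    ContDiffAt ℝ m (lap f) x :=
  ContDiffAt.sum fun _ _ => (hf.pd (by rw [add_assoc]; exact hmn)).pd le_rfl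

lemma ContDiffAt.eventually_differentiableAt (hf : ContDiffAt ℝ 1 f x) :
    ∀ᶠ y in 𝓝 x, DifferentiableAt ℝ f y := by
  filter_upwards [hf.eventually (by simp)] with y hy using hy.differentiableAt_one

lemma lap_sub (hf : ContDiffAt ℝ 2 f x) (hg : ContDiffAt ℝ 2 g x) :
    lap (fun y => f y - g y) x = lap f x - lap g x := by
  rw [lap, lap, lap, ← Finset.sum_sub_distrib]
  refine Finset.sum_congr rfl fun i _ => ?_
  have hpd : pd i (fun y => f y - g y) =ᶠ[𝓝 x] fun y => pd i f y - pd i g y := by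
    filter_upwards [(hf.of_le one_le_two).eventually_differentiableAt,
      (hg.of_le one_le_two).eventually_differentiableAt] with y hfy hgy using pd_sub hfy hgy
  rw [pd_congr_of_eventuallyEq hpd, pd_sub ((hf.pd le_rfl).differentiableAt_one)
    ((hg.pd le_rfl).differentiableAt_one)]

lemma lap_mul (hf : ContDiffAt ℝ 2 f x) (hg : ContDiffAt ℝ 2 g x) :
    lap (fun y => f y * g y) x
      = lap f x * g x + 2 * ∑ i : Fin 4, pd i f x * pd i g x + f x * lap g x := by
  have hf1 (i : Fin 4) : DifferentiableAt ℝ (pd i f) x :=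
    (hf.pd (m := 1) le_rfl).differentiableAt_one
  have hg1 (i : Fin 4) : DifferentiableAt ℝ (pd i g) x :=
    (hg.pd (m := 1) le_rfl).differentiableAt_one
  have hf0 := (hf.of_le one_le_two).differentiableAt_one
  have hg0 := (hg.of_le one_le_two).differentiableAt_one
  have hpd (i : Fin 4) : pd i (pd i fun y => f y * g y) x
      = pd i (pd i f) x * g x + 2 * (pd i f x * pd i g x) + f x * pd i (pd i g) x := by
    have hprod : pd i (fun y => f y * g y) =ᶠ[𝓝 x] fun y => pd i f y * g y + f y * pd i g y := by
      filter_upwards [(hf.of_le one_le_two).eventually_differentiableAt,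
        (hg.of_le one_le_two).eventually_differentiableAt] with y hfy hgy using pd_mul hfy hgy
    rw [pd_congr_of_eventuallyEq hprod, pd_add ((hf1 i).fun_mul hg0) (hf0.fun_mul (hg1 i)),
      pd_mul (hf1 i) hg0, pd_mul hf0 (hg1 i)]
    ring
  simp only [lap, hpd, Finset.sum_add_distrib, Finset.mul_sum, Finset.sum_mul]

lemma lap_sum {ι : Type*} (s : Finset ι) {F : ι → E4 → ℝ}
    (hF : ∀ j ∈ s, ContDiffAt ℝ 2 (F j) x) :
    lap (fun y => ∑ j ∈ s, F j y) x = ∑ j ∈ s, lap (F j) x := by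
  simp only [lap]
  rw [Finset.sum_comm]
  refine Finset.sum_congr rfl fun i _ => ?_
  have hpd : pd i (fun y => ∑ j ∈ s, F j y) =ᶠ[𝓝 x] fun y => ∑ j ∈ s, pd i (F j) y := by
    have := s.eventually_all.2 fun j hj => ((hF j hj).of_le one_le_two).eventually_differentiableAt
    filter_upwards [this] with y hy using pd_sum s hy
  rw [pd_congr_of_eventuallyEq hpd,
    pd_sum s fun j hj => ((hF j hj).pd le_rfl).differentiableAt_one]

lemma lap_sum_mul {ι : Type*} (s : Finset ι) {F G : ι → E4 → ℝ}
    (hF : ∀ j ∈ s, ContDiffAt ℝ 2 (F j) x) (hG : ∀ j ∈ s, ContDiffAt ℝ 2 (G j) x) :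
    lap (fun y => ∑ j ∈ s, F j y * G j y) x
      = ∑ j ∈ s, (lap (F j) x * G j x + 2 * ∑ i : Fin 4, pd i (F j) x * pd i (G j) x
          + F j x * lap (G j) x) := by
  rw [lap_sum s fun j hj => (hF j hj).mul (hG j hj)]
  exact Finset.sum_congr rfl fun j hj => lap_mul (hF j hj) (hG j hj)

end Calculus

section Wedge

variable {k : ℕ}

lemma wedge_self (v : Fin (k+1) → ℝ) (α β : Fin (k+1)) : wedge v v α β = 0 := by
  rw [wedge, mul_comm, sub_self]

lemma sum_wedge_left {ι : Type*} (s : Finset ι) (v : ι → Fin (k+1) → ℝ) (w : Fin (k+1) → ℝ)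
    (α β : Fin (k+1)) :
    ∑ i ∈ s, wedge (v i) w α β = wedge (fun b => ∑ i ∈ s, v i b) w α β := by
  simp only [wedge, Finset.sum_sub_distrib, Finset.sum_mul]

lemma sum_wedge_right {ι : Type*} (s : Finset ι) (v : Fin (k+1) → ℝ) (w : ι → Fin (k+1) → ℝ)
    (α β : Fin (k+1)) :
    ∑ i ∈ s, wedge v (w i) α β = wedge v (fun b => ∑ i ∈ s, w i b) α β := by
  simp only [wedge, Finset.sum_sub_distrib, Finset.mul_sum]

lemma sum_wedge_mul_right (v u : Fin (k+1) → ℝ) (α : Fin (k+1)) :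
    ∑ β, wedge v u α β * u β = v α * ∑ β, u β * u β - (∑ β, v β * u β) * u α := by
  simp only [wedge, Finset.mul_sum, Finset.sum_mul, ← Finset.sum_sub_distrib]
  exact Finset.sum_congr rfl fun β _ => by ring

lemma forall_add_mul_eq_iff_wedge_eq {B u h : Fin (k+1) → ℝ} {c : ℝ}
    (hu : ∑ b, u b * u b = 1) (hB : ∑ b, u b * B b = -c) (hh : ∑ b, h b * u b = 0) :
    (∀ a, B a + c * u a = h a) ↔ ∀ α β, wedge B u α β = wedge h u α β := by
  constructor
  · intro hBh α β
    simp only [wedge, ← hBh]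
    ring
  · intro hBh a
    have hsum := sum_wedge_mul_right B u a
    simp only [hBh, sum_wedge_mul_right, hu, hh] at hsum
    rw [Finset.sum_congr rfl fun b _ => mul_comm (B b) (u b), hB] at hsum
    linarith

end Wedge

section WedgeCalculus

variable {k : ℕ} {F G : Fin (k+1) → E4 → ℝ} {x : E4}

lemma pd_wedge (hF : ∀ b, DifferentiableAt ℝ (F b) x) (hG : ∀ b, DifferentiableAt ℝ (G b) x)
    (i : Fin 4) (α β : Fin (k+1)) :
    pd i (fun z => wedge (fun b => F b z) (fun b => G b z) α β) x
      = wedge (fun b => pd i (F b) x) (fun b => G b x) α β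
        + wedge (fun b => F b x) (fun b => pd i (G b) x) α β := by
  simp only [wedge]
  rw [pd_sub ((hF α).fun_mul (hG β)) ((hF β).fun_mul (hG α)), pd_mul (hF α) (hG β),
    pd_mul (hF β) (hG α)]
  ring

lemma lap_wedge (hF : ∀ b, ContDiffAt ℝ 2 (F b) x) (hG : ∀ b, ContDiffAt ℝ 2 (G b) x)
    (α β : Fin (k+1)) :
    lap (fun z => wedge (fun b => F b z) (fun b => G b z) α β) x
      = wedge (fun b => lap (F b) x) (fun b => G b x) α β
        + 2 * ∑ i : Fin 4, wedge (fun b => pd i (F b) x) (fun b => pd i (G b) x) α β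
        + wedge (fun b => F b x) (fun b => lap (G b) x) α β := by
  simp only [wedge]
  rw [lap_sub ((hF α).mul (hG β)) ((hF β).mul (hG α)), lap_mul (hF α) (hG β),
    lap_mul (hF β) (hG α), Finset.sum_sub_distrib]
  ring

end WedgeCalculus

section VectorValued

variable {k : ℕ} {u : E4 → EuclideanSpace ℝ (Fin (k+1))} {x : E4}

lemma sum_pd_wedge_pd_self (hu : ContDiffAt ℝ 2 u x) (α β : Fin (k+1)) :
    ∑ i : Fin 4, pd i (fun z => wedge (fun b => pd i (fun w => u w b) z) (fun b => u z b) α β) x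
      = wedge (fun b => lap (fun w => u w b) x) (fun b => u x b) α β := by
  have hua a := (contDiffAt_piLp 2).1 hu a
  rw [Finset.sum_congr rfl fun i _ => pd_wedge (F := fun b => pd i (fun w => u w b))
    (G := fun b w => u w b) (fun b => ((hua b).pd (m := 1) le_rfl).differentiableAt_one)
    (fun b => ((hua b).of_le one_le_two).differentiableAt_one) i α β]
  simp only [wedge_self, add_zero, sum_wedge_left]
  rfl

lemma lap_sum_pd_wedge_pd_self (hu : ContDiffAt ℝ 4 u x) (α β : Fin (k+1)) :
    lap (fun y => ∑ i : Fin 4,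
        pd i (fun z => wedge (fun b => pd i (fun w => u w b) z) (fun b => u z b) α β) y) x
      = 2 * ∑ i : Fin 4, pd i (fun z => wedge (fun b => lap (fun w => u w b) z)
          (fun b => pd i (fun w => u w b) z) α β) x
        + wedge (fun b => bilap (fun w => u w b) x) (fun b => u x b) α β := by
  have hua a := (contDiffAt_piLp 2).1 hu a
  have hsum : (fun y => ∑ i : Fin 4,
      pd i (fun z => wedge (fun b => pd i (fun w => u w b) z) (fun b => u z b) α β) y)
      =ᶠ[𝓝 x] fun y => wedge (fun b => lap (fun w => u w b) y) (fun b => u y b) α β := by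
    filter_upwards [hu.eventually (by simp)] with y huy
    exact sum_pd_wedge_pd_self (huy.of_le (by norm_num)) α β
  have hlap_lap : wedge (fun b => lap (fun w => u w b) x) (fun b => lap (fun w => u w b) x) α β
      = 0 := wedge_self _ α β
  have hlap_sum : wedge (fun b => lap (fun w => u w b) x)
      (fun b => ∑ i : Fin 4, pd i (pd i fun w => u w b) x) α β = 0 := wedge_self _ α β
  rw [lap_congr_of_eventuallyEq hsum, lap_wedge (F := fun b => lap (fun w => u w b))
    (G := fun b w => u w b) (fun b => (hua b).lap le_rfl) (fun b => (hua b).of_le (by norm_num)),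
    Finset.sum_congr rfl fun i _ => pd_wedge (F := fun b => lap (fun w => u w b))
      (G := fun b => pd i (fun w => u w b))
      (fun b => ((hua b).lap (m := 1) (by norm_num)).differentiableAt_one)
      (fun b => ((hua b).pd (m := 1) (by norm_num)).differentiableAt_one) i α β,
    Finset.sum_add_distrib, sum_wedge_right, hlap_lap, hlap_sum]
  unfold bilap
  ring

lemma sum_mul_self_eq_one_of_norm_eq_one {v : EuclideanSpace ℝ (Fin (k+1))} (hv : ‖v‖ = 1) :
    ∑ a, v a * v a = 1 := by
  simp only [← sq, ← EuclideanSpace.real_norm_sq_eq, hv, one_pow]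

lemma sum_mul_lap_eq_neg_gradSq (hu : ContDiffAt ℝ 2 u x)
    (hunit : ∀ᶠ y in 𝓝 x, ‖u y‖ = 1) :
    ∑ a, u x a * lap (fun y => u y a) x = -gradSq u x := by
  have hua a := (contDiffAt_piLp 2).1 hu a
  have hlap : lap (fun y => ∑ a, u y a * u y a) x = 0 := by
    rw [lap_congr_of_eventuallyEq (hunit.mono fun y => sum_mul_self_eq_one_of_norm_eq_one),
      lap_const]
  rw [lap_sum_mul _ (fun a _ => hua a) (fun a _ => hua a)] at hlap
  simp only [Finset.sum_add_distrib, ← Finset.mul_sum] at hlap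
  rw [Finset.sum_comm] at hlap
  simp only [mul_comm (lap _ x) (u x _)] at hlap
  simp only [gradSq, sq]
  linarith

lemma sum_mul_bilap_eq (hu : ContDiffAt ℝ 4 u x) (hunit : ∀ᶠ y in 𝓝 x, ‖u y‖ = 1) :
    ∑ a, u x a * bilap (fun y => u y a) x
      = -(lapNormSq u x + lap (gradSq u) x + 2 * gradLapInner u x) := by
  have hua a := (contDiffAt_piLp 2).1 hu a
  have hgrad : (fun y => ∑ a, u y a * lap (fun w => u w a) y) =ᶠ[𝓝 x] fun y => -gradSq u y := by
    filter_upwards [hu.eventually (by simp), hunit.eventually_nhds] with y huy hunity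
    exact sum_mul_lap_eq_neg_gradSq (huy.of_le (by norm_num)) hunity
  have hlap := lap_congr_of_eventuallyEq hgrad
  rw [lap_neg, lap_sum_mul _ (fun a _ => (hua a).of_le (by norm_num))
    (fun a _ => (hua a).lap le_rfl)] at hlap
  simp only [Finset.sum_add_distrib, ← Finset.mul_sum] at hlap
  rw [Finset.sum_comm] at hlap
  simp only [lapNormSq, gradLapInner, bilap, sq]
  linarith

end VectorValued

theorem stmt3_general {k : ℕ} (Ω : Set E4) (hΩ : IsOpen Ω)
    (u h : E4 → EuclideanSpace ℝ (Fin (k+1)))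
    (hu : ContDiffOn ℝ 5 u Ω) (hunit : ∀ x ∈ Ω, ‖u x‖ = 1)
    (horth : ∀ x ∈ Ω, (∑ a : Fin (k+1), h x a * u x a) = 0) :
    IsApproxBiharm u h Ω ↔
      ∀ x ∈ Ω, ∀ α β : Fin (k+1),
        lap (fun y => ∑ i : Fin 4,
            pd i (fun z => wedge (fun b => pd i (fun w => u w b) z) (fun b => u z b) α β) y) x
          = 2 * (∑ i : Fin 4,
              pd i (fun z => wedge (fun b => lap (fun w => u w b) z)
                (fun b => pd i (fun w => u w b) z) α β) x)
            + wedge (fun b => h x b) (fun b => u x b) α β := by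
  refine forall₂_congr fun x hx => ?_
  have hux : ContDiffAt ℝ 4 u x := (hu.contDiffAt (hΩ.mem_nhds hx)).of_le (by norm_num)
  simp only [lap_sum_pd_wedge_pd_self hux, add_right_inj]
  exact forall_add_mul_eq_iff_wedge_eq (sum_mul_self_eq_one_of_norm_eq_one (hunit x hx))
    (sum_mul_bilap_eq hux (eventually_of_mem (hΩ.mem_nhds hx) hunit)) (horth x hx)

/-- for a `C⁵` sphere-valued map `u` and continuous `h` with `⟨h, u⟩ = 0`,
the approximate biharmonic map equation is equivalent to
`Δ(∑ᵢ ∂ᵢ(∂ᵢu × u)) = 2∑ᵢ ∂ᵢ(Δu × ∂ᵢu) + h × u` componentwise. -/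
theorem stmt3 {k : ℕ} (hk : 1 ≤ k) (Ω : Set E4) (hΩ : IsOpen Ω)
    (u h : E4 → EuclideanSpace ℝ (Fin (k+1)))
    (hu : ContDiffOn ℝ 5 u Ω) (hunit : ∀ x ∈ Ω, ‖u x‖ = 1)
    (hh : ContinuousOn h Ω)
    (horth : ∀ x ∈ Ω, (∑ a : Fin (k+1), h x a * u x a) = 0) :
    IsApproxBiharm u h Ω ↔
      ∀ x ∈ Ω, ∀ α β : Fin (k+1),
        lap (fun y => ∑ i : Fin 4,
            pd i (fun z => wedge (fun b => pd i (fun w => u w b) z) (fun b => u z b) α β) y) x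
          = 2 * (∑ i : Fin 4,
              pd i (fun z => wedge (fun b => lap (fun w => u w b) z)
                (fun b => pd i (fun w => u w b) z) α β) x)
            + wedge (fun b => h x b) (fun b => u x b) α β :=
  stmt3_general Ω hΩ u h hu hunit horth

end
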